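/- Let m be a natural number with m ≥ 1. Then at every point x ≠ 0 of ℝ² (EuclideanSpace ℝ 2), the function x ↦ ‖x‖^{2m}·ln‖x‖ is twice differentiable and Δ(‖x‖^{2m}·ln‖x‖) = 4m²·‖x‖^{2m−2}·ln‖x‖ + 4m·‖x‖^{2m−2}, and likewise Δ(‖x‖^{2m}) = 4m²·‖x‖^{2m−2}. (These are the two Laplacian evaluations underlying the recursion formulas A_{j+1} = A_j/(4(j+1)²) and B_{j+1} = (A_j/(j+1) + B_j)/(4(j+1)²) for the higher-order fundamental solutions of the 2D Laplace operator.) -/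

import Mathlib

/-!
Both functions are radial, `f y = g (‖y‖²)` with `g t = t ^ m` resp. `g t = t ^ m * log t / 2`.
The gradient of such a function is `2 g'(‖y‖²) • y`, whose derivative at `x` is
`2 g'(t) • id + 4 g''(t) ⟪x, ·⟫ • x` with `t = ‖x‖²`; in dimension `n` its trace is
`2 n g'(t) + 4 t g''(t)`, and both formulas reduce to one-variable calculus on `g`.
-/

open Filter Topology Real
open scoped RealInnerProductSpace

section RadialLaplacian

variable {E : Type*} [NormedAddCommGroup E] [InnerProductSpace ℝ E] [CompleteSpace E]

def HasLaplacianAt (f : E → ℝ) (c : ℝ) (x : E) : Prop :=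
  DifferentiableAt ℝ f x ∧ DifferentiableAt ℝ (gradient f) x ∧
    LinearMap.trace ℝ E (fderiv ℝ (gradient f) x).toLinearMap = c

variable {g g' : ℝ → ℝ} {g'' : ℝ} {x : E}

theorem hasGradientAt_comp_norm_sq {d : ℝ} (hg : HasDerivAt g d (‖x‖ ^ 2)) :
    HasGradientAt (fun y : E => g (‖y‖ ^ 2)) ((2 * d) • x) x := by
  rw [hasGradientAt_iff_hasFDerivAt]
  refine (hg.comp_hasFDerivAt x (hasStrictFDerivAt_norm_sq x).hasFDerivAt).congr_fderiv ?_
  ext v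
  simp only [smul_apply, coe_innerSL_apply, nsmul_eq_mul, smul_eq_mul,
    map_smul, InnerProductSpace.toDual_apply_apply]
  ring

theorem gradient_comp_norm_sq_eventuallyEq
    (hg : ∀ᶠ t in 𝓝 (‖x‖ ^ 2), HasDerivAt g (g' t) t) :
    gradient (fun y : E => g (‖y‖ ^ 2)) =ᶠ[𝓝 x] fun y => (2 * g' (‖y‖ ^ 2)) • y :=
  ((continuous_norm.pow 2).tendsto x).eventually hg |>.mono
    fun _ hy => (hasGradientAt_comp_norm_sq hy).gradient

theorem hasFDerivAt_gradient_comp_norm_sq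
    (hg : ∀ᶠ t in 𝓝 (‖x‖ ^ 2), HasDerivAt g (g' t) t) (hg' : HasDerivAt g' g'' (‖x‖ ^ 2)) :
    HasFDerivAt (gradient fun y : E => g (‖y‖ ^ 2))
      ((2 * g' (‖x‖ ^ 2)) • ContinuousLinearMap.id ℝ E
        + ((4 * g'') • innerSL ℝ x).smulRight x) x := by
  refine HasFDerivAt.congr_of_eventuallyEq ?_ (gradient_comp_norm_sq_eventuallyEq hg)
  refine (((hg'.const_mul 2).comp_hasFDerivAt x (hasStrictFDerivAt_norm_sq x).hasFDerivAt).smul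
    (hasFDerivAt_id x)).congr_fderiv ?_
  ext v
  simp only [Function.comp_apply, id_eq, add_apply, smul_apply, ContinuousLinearMap.id_apply,
    ContinuousLinearMap.smulRight_apply, coe_innerSL_apply, nsmul_eq_mul, smul_eq_mul]
  module

theorem hasLaplacianAt_comp_norm_sq [FiniteDimensional ℝ E]
    (hg : ∀ᶠ t in 𝓝 (‖x‖ ^ 2), HasDerivAt g (g' t) t) (hg' : HasDerivAt g' g'' (‖x‖ ^ 2)) :
    HasLaplacianAt (fun y : E => g (‖y‖ ^ 2))
      (2 * Module.finrank ℝ E * g' (‖x‖ ^ 2) + 4 * ‖x‖ ^ 2 * g'') x := by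
  have hD := hasFDerivAt_gradient_comp_norm_sq hg hg'
  refine ⟨(hasGradientAt_comp_norm_sq hg.self_of_nhds).differentiableAt,
    hD.differentiableAt, ?_⟩
  rw [hD.fderiv]
  simp only [ContinuousLinearMap.toLinearMap_add, ContinuousLinearMap.toLinearMap_smul,
    ContinuousLinearMap.coe_id, ContinuousLinearMap.coe_smulRight,
    ContinuousLinearMap.toLinearMap_innerSL_apply, map_add, map_smul, LinearMap.trace_id,
    smul_eq_mul, LinearMap.trace_smulRight, LinearMap.smul_apply, innerₛₗ_apply_apply,
    real_inner_self_eq_norm_sq]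
  ring

end RadialLaplacian

theorem natCast_mul_pow_sub_one_mul {R : Type*} [Semiring R] (k : ℕ) (t : R) :
    (k : R) * t ^ (k - 1) * t = k * t ^ k := by
  rcases eq_or_ne k 0 with rfl | hk
  · simp
  · rw [mul_assoc, pow_sub_one_mul hk]

section NormPow

variable {E : Type*} [NormedAddCommGroup E] [InnerProductSpace ℝ E] [FiniteDimensional ℝ E]

theorem hasLaplacianAt_norm_pow (k : ℕ) (x : E) :
    HasLaplacianAt (fun y : E => ‖y‖ ^ (2 * (k + 1)))
      (2 * (k + 1) * (Module.finrank ℝ E + 2 * k) * ‖x‖ ^ (2 * k)) x := by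
  have hg : ∀ t : ℝ, HasDerivAt (fun t => t ^ (k + 1)) ((k + 1) * t ^ k) t := fun t => by
    simpa using hasDerivAt_pow (k + 1) t
  have hg' := (hasDerivAt_pow k (‖x‖ ^ 2)).const_mul ((k : ℝ) + 1)
  simp only [pow_mul] at hg' ⊢
  convert hasLaplacianAt_comp_norm_sq (.of_forall hg) hg' using 1
  linear_combination (-4 * ((k : ℝ) + 1)) * natCast_mul_pow_sub_one_mul k (‖x‖ ^ 2)

theorem hasLaplacianAt_norm_pow_mul_log (k : ℕ) {x : E} (hx : x ≠ 0) :
    HasLaplacianAt (fun y : E => ‖y‖ ^ (2 * (k + 1)) * log ‖y‖)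
      (2 * (k + 1) * (Module.finrank ℝ E + 2 * k) * ‖x‖ ^ (2 * k) * log ‖x‖
        + (Module.finrank ℝ E + 4 * k + 2) * ‖x‖ ^ (2 * k)) x := by
  have hx2 : ‖x‖ ^ 2 ≠ 0 := by positivity
  have hg : ∀ t : ℝ, t ≠ 0 → HasDerivAt (fun t => t ^ (k + 1) * log t / 2)
      ((k + 1) * t ^ k * log t / 2 + t ^ k / 2) t := fun t ht => by
    refine (((hasDerivAt_pow (k + 1) t).mul (hasDerivAt_log ht)).div_const 2).congr_deriv ?_
    rw [Nat.add_sub_cancel, pow_succ, mul_assoc (t ^ k), mul_inv_cancel₀ ht]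
    push_cast
    ring
  have hg' := ((((hasDerivAt_pow k (‖x‖ ^ 2)).const_mul ((k : ℝ) + 1)).mul
    (hasDerivAt_log hx2)).div_const 2).add ((hasDerivAt_pow k (‖x‖ ^ 2)).div_const 2)
  have hf : (fun y : E => ‖y‖ ^ (2 * (k + 1)) * log ‖y‖)
      = fun y => (‖y‖ ^ 2) ^ (k + 1) * log (‖y‖ ^ 2) / 2 := by
    funext y
    rw [pow_mul, log_pow]
    push_cast
    ring
  rw [hf]
  convert hasLaplacianAt_comp_norm_sq ((eventually_ne_nhds hx2).mono hg) hg' using 1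
  rw [pow_mul, log_pow]
  have hinv : ‖x‖ ^ 2 * (‖x‖ ^ 2)⁻¹ = 1 := mul_inv_cancel₀ hx2
  push_cast
  linear_combination (-4 * ((k : ℝ) + 1) * log ‖x‖ - 2) * natCast_mul_pow_sub_one_mul k (‖x‖ ^ 2)
    - (2 * ((k : ℝ) + 1) * (‖x‖ ^ 2) ^ k) * hinv

end NormPow

/-- The two Laplacian evaluations underlying the recursion for the higher-order fundamental
solutions of the 2D Laplace operator: for `m ≥ 1` and `x ≠ 0` in `ℝ²`, the functions
`x ↦ ‖x‖^(2m)·ln‖x‖` and `x ↦ ‖x‖^(2m)` are twice differentiable at `x` and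
`Δ(‖x‖^(2m)·ln‖x‖) = 4m²·‖x‖^(2m−2)·ln‖x‖ + 4m·‖x‖^(2m−2)` and
`Δ(‖x‖^(2m)) = 4m²·‖x‖^(2m−2)`, the Laplacian being the trace of the second derivative. -/
theorem stmt9 (m : ℕ) (hm : 1 ≤ m) :
    ∀ x : EuclideanSpace ℝ (Fin 2), x ≠ 0 →
      (DifferentiableAt ℝ (fun y : EuclideanSpace ℝ (Fin 2) => ‖y‖ ^ (2 * m) * Real.log ‖y‖) x ∧
        DifferentiableAt ℝ
          (gradient (fun y : EuclideanSpace ℝ (Fin 2) => ‖y‖ ^ (2 * m) * Real.log ‖y‖)) x ∧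
        LinearMap.trace ℝ (EuclideanSpace ℝ (Fin 2))
            (fderiv ℝ
              (gradient (fun y : EuclideanSpace ℝ (Fin 2) => ‖y‖ ^ (2 * m) * Real.log ‖y‖))
              x).toLinearMap
          = 4 * (m : ℝ) ^ 2 * ‖x‖ ^ (2 * m - 2) * Real.log ‖x‖
            + 4 * (m : ℝ) * ‖x‖ ^ (2 * m - 2)) ∧
      (DifferentiableAt ℝ (fun y : EuclideanSpace ℝ (Fin 2) => ‖y‖ ^ (2 * m)) x ∧
        DifferentiableAt ℝ
          (gradient (fun y : EuclideanSpace ℝ (Fin 2) => ‖y‖ ^ (2 * m))) x ∧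
        LinearMap.trace ℝ (EuclideanSpace ℝ (Fin 2))
            (fderiv ℝ
              (gradient (fun y : EuclideanSpace ℝ (Fin 2) => ‖y‖ ^ (2 * m))) x).toLinearMap
          = 4 * (m : ℝ) ^ 2 * ‖x‖ ^ (2 * m - 2)) := by
  obtain ⟨k, rfl⟩ := Nat.exists_eq_add_of_le' hm
  intro x hx
  have hlog := hasLaplacianAt_norm_pow_mul_log k hx
  have hpow := hasLaplacianAt_norm_pow k x
  rw [finrank_euclideanSpace_fin] at hlog hpow
  rw [show 2 * (k + 1) - 2 = 2 * k by omega]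
  refine ⟨show HasLaplacianAt _ _ x from ?_, show HasLaplacianAt _ _ x from ?_⟩
  · convert hlog using 1
    push_cast
    ring
  · convert hpow using 1
    push_cast
    ring
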